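/- Let (S,≤) be as in the context, E a countable measurable color space, and γ a partially oriented specification (POS) on Ω=E^S. Then for every time box Δ there exists an enumeration x₁,…,xₙ of the points of Δ such that γ_Δ equals the composition γ_{x₁}γ_{x₂}⋯γ_{xₙ} of the single-site kernels, i.e. for every bounded ℱ_{⌊Δ⌋}-measurable h and every ω∈Ω, γ_Δ(h,ω) = ∫⋯∫ h dγ_{xₙ}⋯dγ_{x₁}(·,ω). -/

import Mathlib

open MeasureTheory Filter Topology
open scoped ENNReal

namespace POCpaper

section Geometry

variable {S : Type*} [PartialOrder S]

/-- The past of a set of sites. -/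
def past (Υ : Set S) : Set S := {x | x ∉ Υ ∧ ∃ y ∈ Υ, x < y}

/-- The future of a set of sites. -/
def future (Υ : Set S) : Set S := {x | x ∉ Υ ∧ ∃ y ∈ Υ, y < x}

/-- The outer time of a set of sites: sites incomparable with every site of the set. -/
def outerT (Υ : Set S) : Set S := {x | ∀ y ∈ Υ, ¬ x ≤ y ∧ ¬ y ≤ x}

/-- Maximal elements of a set. -/
def sMax (A : Set S) : Set S := {x | x ∈ A ∧ ∀ y ∈ A, ¬ x < y}

/-- Minimal elements of a set. -/
def sMin (A : Set S) : Set S := {x | x ∈ A ∧ ∀ y ∈ A, ¬ y < x}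

/-- The (strict) past of a single site. -/
def pastPt (x : S) : Set S := {y | y < x}

/-- The (strict) future of a single site. -/
def futPt (x : S) : Set S := {y | x < y}

/-- A time box: a finite set whose past and future are disjoint. -/
def IsTimeBox (Λ : Finset S) : Prop := past (Λ : Set S) ∩ future (Λ : Set S) = ∅

/-- `⌊Λ⌋ = S ∖ Λ₊`. -/
def floorB (Λ : Finset S) : Set S := (future (Λ : Set S))ᶜ

/-- `Λ° = Λ₋ ∪ Λ*`. -/
def ringB (Λ : Finset S) : Set S := past (Λ : Set S) ∪ outerT (Λ : Set S)

/-- The nearest past `∂Λ` of a box. -/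
def nearPast (Λ : Finset S) : Set S := (⋃ x ∈ Λ, sMax (pastPt x)) \ (Λ : Set S)

/-- A slice: a (finite) set of pairwise incomparable sites. -/
def IsSliceSet (A : Set S) : Prop := A.Finite ∧ ∀ x ∈ A, ∀ y ∈ A, x ≠ y → ¬ x ≤ y

end Geometry

/-- The standing assumptions on the site space `S`. -/
structure Standing (S : Type*) [PartialOrder S] : Prop where
  finMax : ∀ x : S, (sMax (pastPt x)).Finite
  finMin : ∀ x : S, (sMin (futPt x)).Finite
  reachMax : ∀ x y : S, y < x → ∃ y₀ ∈ sMax (pastPt x), y ≤ y₀ ∧ y₀ < x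
  reachMin : ∀ x z : S, x < z → ∃ z₀ ∈ sMin (futPt x), z₀ ≤ z ∧ x < z₀
  noMinimal : ∀ x : S, ∃ y : S, y < x

/-- A function is bounded. -/
def Bounded {α : Type*} (f : α → ℝ) : Prop := ∃ C : ℝ, ∀ a, |f a| ≤ C

section Kernels

variable {S : Type*} [PartialOrder S] (E : Type*) [MeasurableSpace E]

/-- `ℱ_Υ`: the sub-σ-algebra of the product σ-algebra generated by the coordinates in `Υ`. -/
def F (Υ : Set S) : MeasurableSpace (S → E) :=
  MeasurableSpace.comap (fun ω (y : Υ) => ω y) MeasurableSpace.pi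

/-- A measure on `Ω` with the σ-algebra `ℱ_{⌊Λ⌋}`. -/
abbrev BoxMeasure (Λ : Finset S) := @Measure (S → E) (F E (floorB Λ))

/-- A proper oriented kernel on a time box `Λ`. -/
structure IsProperKernel (Λ : Finset S) (κ : (S → E) → BoxMeasure E Λ) : Prop where
  prob : ∀ ω, IsProbabilityMeasure (κ ω)
  measOuter : ∀ A : Set (S → E), MeasurableSet[F E (floorB Λ)] A →
    Measurable[F E (ringB Λ)] fun ω => κ ω A
  measPast : ∀ A : Set (S → E), MeasurableSet[F E ((Λ : Set S))] A →
    Measurable[F E (past (Λ : Set S))] fun ω => κ ω A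
  proper : ∀ B : Set (S → E), MeasurableSet[F E (ringB Λ)] B →
    ∀ ω, κ ω B = B.indicator (fun _ => (1 : ℝ≥0∞)) ω

/-- A partially oriented specification (POS). -/
structure IsPOS (γ : ∀ Λ : Finset S, (S → E) → BoxMeasure E Λ) : Prop where
  proper : ∀ Λ : Finset S, IsTimeBox Λ → IsProperKernel E Λ (γ Λ)
  consist : ∀ Λ Δ : Finset S, IsTimeBox Λ → IsTimeBox Δ → Λ ⊆ Δ →
    ∀ h : (S → E) → ℝ, Measurable[F E (floorB Λ)] h → Bounded h →
      ∀ ω : S → E, ∫ σ, (∫ ξ, h ξ ∂(γ Λ σ)) ∂(γ Δ ω) = ∫ σ, h σ ∂(γ Δ ω)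

/-- A measure consistent with a POS: a partially oriented chain (γ-POC). -/
def IsPOC (γ : ∀ Λ : Finset S, (S → E) → BoxMeasure E Λ) (μ : Measure (S → E)) : Prop :=
  IsProbabilityMeasure μ ∧
  ∀ Λ : Finset S, IsTimeBox Λ →
    ∀ h : (S → E) → ℝ, Measurable[F E (floorB Λ)] h → Bounded h →
      ∫ σ, (∫ ξ, h ξ ∂(γ Λ σ)) ∂μ = ∫ σ, h σ ∂μ

/-- The tail σ-algebra `ℱ₋∞ = ⋂_{Λ time box} ℱ_{Λ°}`. -/
def tailField : MeasurableSpace (S → E) :=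
  ⨅ (Λ : Finset S) (_ : IsTimeBox Λ), F E (ringB Λ)

/-- Extreme points of the convex set `𝒢(γ)`. -/
def IsExtremePOC (γ : ∀ Λ : Finset S, (S → E) → BoxMeasure E Λ) (μ : Measure (S → E)) : Prop :=
  IsPOC E γ μ ∧
  ∀ (t : ℝ≥0∞) (ν₁ ν₂ : Measure (S → E)), 0 < t → t < 1 →
    IsPOC E γ ν₁ → IsPOC E γ ν₂ → μ = t • ν₁ + (1 - t) • ν₂ → ν₁ = ν₂

/-- A local function: measurable with respect to finitely many coordinates. -/
def IsLocal (f : (S → E) → ℝ) : Prop := ∃ Υ : Finset S, Measurable[F E ((Υ : Set S))] f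

/-- A quasilocal function: uniform limit of bounded local functions. -/
def IsQuasilocal (f : (S → E) → ℝ) : Prop :=
  ∀ ε : ℝ, 0 < ε → ∃ g : (S → E) → ℝ, IsLocal E g ∧ Bounded g ∧ ∀ ω, |f ω - g ω| ≤ ε

/-- A local event. -/
def IsLocalEvent (A : Set (S → E)) : Prop := ∃ Υ : Finset S, MeasurableSet[F E ((Υ : Set S))] A

/-- A quasilocal POS. -/
def IsQuasilocalPOS (γ : ∀ Λ : Finset S, (S → E) → BoxMeasure E Λ) : Prop :=
  IsPOS E γ ∧ ∀ Λ : Finset S, IsTimeBox Λ → ∀ A : Set (S → E), IsLocalEvent E A →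
    MeasurableSet[F E (floorB Λ)] A → IsQuasilocal E fun ω => (γ Λ ω A).toReal

/-- A POMM: a Markovian POS, whose kernels depend on the past only through the nearest past. -/
def IsPOMM (γ : ∀ Λ : Finset S, (S → E) → BoxMeasure E Λ) : Prop :=
  IsPOS E γ ∧ ∀ Λ : Finset S, IsTimeBox Λ → ∀ A : Set (S → E),
    MeasurableSet[F E ((Λ : Set S))] A → Measurable[F E (nearPast Λ)] fun ω => γ Λ ω A

/-- Two configurations agreeing at every site except possibly `x`. -/
def agreeExcept (x : S) (ξ η : S → E) : Prop := ∀ z : S, z ≠ x → ξ z = η z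

/-- The oscillation `δ_x(f)` of `f` at the site `x`. -/
noncomputable def osc (x : S) (f : (S → E) → ℝ) : ℝ :=
  sSup {d : ℝ | ∃ ξ η : S → E, agreeExcept E x ξ η ∧ d = |f ξ - f η|}

/-- A dust-rate matrix for the POS `γ`. -/
def IsDustRate (γ : ∀ Λ : Finset S, (S → E) → BoxMeasure E Λ) (α : S → S → ℝ) : Prop :=
  (∀ ⦃x y : S⦄, x < y → 0 ≤ α y x) ∧
  ∀ y x : S, x < y → ∀ f : (S → E) → ℝ,
    Measurable[F E ({y} : Set S)] f → Bounded f →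
      osc E x (fun ω => ∫ ξ, f ξ ∂(γ {y} ω)) ≤ osc E y f * α y x

/-- The Dobrushin dust-rate matrix built from variational distances of single-site kernels. -/
noncomputable def dobMatrix (γ : ∀ Λ : Finset S, (S → E) → BoxMeasure E Λ) (y x : S) : ℝ :=
  sSup {d : ℝ | ∃ ξ η : S → E, agreeExcept E x ξ η ∧
    d = (1 / 2) * ∑' a : E,
      |((γ {y} ξ) {σ | σ y = a}).toReal - ((γ {y} η) {σ | σ y = a}).toReal|}

/-- The maximal percolation parameters `p_x^γ` of a POMM. -/
noncomputable def percParam (γ : ∀ Λ : Finset S, (S → E) → BoxMeasure E Λ) (x : S) : ℝ :=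
  sSup {d : ℝ | ∃ ξ η : S → E,
    d = (1 / 2) * ∑' a : E,
      |((γ {x} ξ) {σ | σ x = a}).toReal - ((γ {x} η) {σ | σ x = a}).toReal|}

end Kernels

section Percolation

variable {S : Type*} [PartialOrder S]

/-- An oriented (towards the past) open path from `x` to `y`. -/
def OpenPath (X : S → Bool) (x y : S) : Prop :=
  ∃ L : List S, L ≠ [] ∧ L.head? = some x ∧ L.getLast? = some y ∧
    L.Chain' (fun a b => b ∈ sMax (pastPt a)) ∧ ∀ z ∈ L, X z = true

/-- `x` lies in an infinite oriented open cluster: the event `(x → -∞)`. -/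
def ToMinusInfinity (X : S → Bool) (x : S) : Prop :=
  ∃ c : ℕ → S, StrictAnti c ∧ ∀ n, OpenPath X x (c n)

/-- `ψ` is the product Bernoulli measure with parameters `p`. -/
def IsBernoulliProduct (p : S → ℝ) (ψ : Measure (S → Bool)) : Prop :=
  IsProbabilityMeasure ψ ∧ ∀ (T : Finset S) (b : S → Bool),
    ψ {X | ∀ x ∈ T, X x = b x} = ∏ x ∈ T, ENNReal.ofReal (if b x then p x else 1 - p x)

end Percolation

/-- Iterated application (composition) of the single-site kernels along a list of sites. -/
noncomputable def iterInt {S : Type*} [PartialOrder S] {E : Type*} [MeasurableSpace E]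
    (γ : ∀ Λ : Finset S, (S → E) → BoxMeasure E Λ) (h : (S → E) → ℝ) :
    List S → (S → E) → ℝ
  | [], ω => h ω
  | x :: L, ω => ∫ ξ, iterInt γ h L ξ ∂(γ ({x} : Finset S) ω)

section Reconstruction

open ProbabilityTheory

variable {S : Type*} [PartialOrder S] {E : Type*} [MeasurableSpace E]

/- ### Set-theoretic lemmas -/

private lemma notPF {Λ : Finset S} (hΛ : IsTimeBox Λ) {z : S}
    (h1 : z ∈ past (Λ : Set S)) (h2 : z ∈ future (Λ : Set S)) : False :=
  Set.eq_empty_iff_forall_notMem.mp hΛ z ⟨h1, h2⟩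

private lemma subset_floorB (Λ : Finset S) : (Λ : Set S) ⊆ floorB Λ :=
  fun _ hz hmem => hmem.1 hz

private lemma floor_diff_subset_ring (Λ : Finset S) :
    floorB Λ \ (Λ : Set S) ⊆ ringB Λ := by
  classical
  rintro z ⟨hzf, hzΛ⟩
  by_cases hp : ∃ y ∈ (Λ : Set S), z < y
  · exact Or.inl ⟨hzΛ, hp⟩
  · refine Or.inr fun y hy => ⟨fun hle => ?_, fun hle => ?_⟩
    · rcases lt_or_eq_of_le hle with h | h
      · exact hp ⟨y, hy, h⟩
      · exact hzΛ (h ▸ hy)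
    · rcases lt_or_eq_of_le hle with h | h
      · exact hzf ⟨hzΛ, y, hy, h⟩
      · exact hzΛ (h ▸ hy)

private lemma ring_subset_floor {Λ : Finset S} (hΛ : IsTimeBox Λ) :
    ringB Λ ⊆ floorB Λ := by
  rintro z (hz | hz) hf
  · exact notPF hΛ hz hf
  · obtain ⟨_, y, hy, hlt⟩ := hf
    exact (hz y hy).2 hlt.le

private lemma timeBox_empty : IsTimeBox (∅ : Finset S) := by
  rw [IsTimeBox, Set.eq_empty_iff_forall_notMem]
  rintro z ⟨⟨_, y, hy, _⟩, _⟩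
  simp at hy

private lemma floorB_empty : floorB (∅ : Finset S) = Set.univ := by
  ext z; simp [floorB, future]

private lemma ringB_empty : ringB (∅ : Finset S) = Set.univ := by
  ext z; simp [ringB, past, outerT]

private lemma timeBox_singleton (x : S) : IsTimeBox ({x} : Finset S) := by
  rw [IsTimeBox, Set.eq_empty_iff_forall_notMem]
  rintro z ⟨⟨_, y1, hy1, hlt1⟩, ⟨_, y2, hy2, hlt2⟩⟩
  simp only [Finset.coe_singleton, Set.mem_singleton_iff] at hy1 hy2
  subst hy1; subst hy2
  exact lt_asymm hlt1 hlt2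

section MinErase

variable {Δ : Finset S} {x : S} [DecidableEq S]

private lemma timeBox_erase (hΔ : IsTimeBox Δ) (hxΔ : x ∈ Δ)
    (hxmin : ∀ y ∈ Δ, ¬ y < x) : IsTimeBox (Δ.erase x) := by
  rw [IsTimeBox, Set.eq_empty_iff_forall_notMem]
  rintro z ⟨⟨hz1, y1, hy1, hlt1⟩, ⟨hz2, y2, hy2, hgt2⟩⟩
  rw [Finset.mem_coe, Finset.mem_erase] at hy1 hy2
  by_cases hzΔ : z ∈ Δ
  · have hzx : z = x := by
      by_contra hne
      exact hz1 (Finset.mem_coe.mpr (Finset.mem_erase.mpr ⟨hne, hzΔ⟩))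
    exact hxmin y2 hy2.2 (hzx ▸ hgt2)
  · exact notPF hΔ ⟨hzΔ, y1, hy1.2, hlt1⟩ ⟨hzΔ, y2, hy2.2, hgt2⟩

private lemma floor_subset_floor_erase (hΔ : IsTimeBox Δ) (hxΔ : x ∈ Δ)
    (hxmin : ∀ y ∈ Δ, ¬ y < x) : floorB Δ ⊆ floorB (Δ.erase x) := by
  refine Set.compl_subset_compl.mpr ?_
  rintro z ⟨hz, y, hy, hlt⟩
  rw [Finset.mem_coe, Finset.mem_erase] at hy
  by_cases hzΔ : z ∈ Δ
  · have hzx : z = x := by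
      by_contra hne
      exact hz (Finset.mem_coe.mpr (Finset.mem_erase.mpr ⟨hne, hzΔ⟩))
    exact absurd (hzx ▸ hlt) (hxmin y hy.2)
  · exact ⟨hzΔ, y, hy.2, hlt⟩

private lemma aux_subset_floor_x (hΔ : IsTimeBox Δ) (hxΔ : x ∈ Δ)
    (hxmin : ∀ y ∈ Δ, ¬ y < x) :
    (floorB Δ \ (↑(Δ.erase x) : Set S)) ∪ past (↑(Δ.erase x) : Set S) ⊆
      floorB ({x} : Finset S) := by
  rintro z hz ⟨hzx, y, hy, hlt⟩
  simp only [Finset.coe_singleton, Set.mem_singleton_iff] at hzx hy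
  rw [hy] at hlt
  rcases hz with ⟨hzfl, hzΔ'⟩ | ⟨hzΔ', y', hy', hlt'⟩
  · rw [Finset.mem_coe, Finset.mem_erase] at hzΔ'
    have hzΔ : z ∉ Δ := fun hmem => hzΔ' ⟨hzx, hmem⟩
    exact hzfl ⟨hzΔ, x, hxΔ, hlt⟩
  · rw [Finset.mem_coe, Finset.mem_erase] at hzΔ' hy'
    have hzΔ : z ∉ Δ := fun hmem => hzΔ' ⟨hzx, hmem⟩
    exact notPF hΔ ⟨hzΔ, y', hy'.2, hlt'⟩ ⟨hzΔ, x, hxΔ, hlt⟩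

private lemma aux_subset_ring (hΔ : IsTimeBox Δ) (hxΔ : x ∈ Δ)
    (hxmin : ∀ y ∈ Δ, ¬ y < x) :
    ((((floorB Δ \ (↑(Δ.erase x) : Set S)) ∪ past (↑(Δ.erase x) : Set S)) \
        (↑({x} : Finset S) : Set S)) ∪ past (↑({x} : Finset S) : Set S)) ⊆ ringB Δ := by
  rintro z (⟨hz, hzx⟩ | ⟨hzx, y, hy, hlt⟩)
  · simp only [Finset.coe_singleton, Set.mem_singleton_iff] at hzx
    rcases hz with ⟨hzfl, hzΔ'⟩ | ⟨hzΔ', y, hy, hlt⟩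
    · rw [Finset.mem_coe, Finset.mem_erase] at hzΔ'
      have hzΔ : z ∉ Δ := fun hmem => hzΔ' ⟨hzx, hmem⟩
      exact floor_diff_subset_ring Δ ⟨hzfl, fun hmem => hzΔ (Finset.mem_coe.mp hmem)⟩
    · rw [Finset.mem_coe, Finset.mem_erase] at hzΔ' hy
      have hzΔ : z ∉ Δ := fun hmem => hzΔ' ⟨hzx, hmem⟩
      exact Or.inl ⟨fun hmem => hzΔ (Finset.mem_coe.mp hmem), y, Finset.mem_coe.mpr hy.2, hlt⟩
  · simp only [Finset.coe_singleton, Set.mem_singleton_iff] at hzx hy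
    rw [hy] at hlt
    have hzΔ : z ∉ Δ := fun hmem => hxmin z hmem hlt
    exact Or.inl ⟨fun hmem => hzΔ (Finset.mem_coe.mp hmem), x, Finset.mem_coe.mpr hxΔ, hlt⟩

end MinErase

/- ### σ-algebra lemmas -/

private lemma F_mono {Υ Υ' : Set S} (h : Υ ⊆ Υ') : F E Υ ≤ F E Υ' := by
  rintro s hs
  obtain ⟨t, ht, rfl⟩ := hs
  exact ⟨(fun f (y : Υ) => f ⟨y.1, h y.2⟩) ⁻¹' t,
    (measurable_pi_lambda _ fun y => measurable_pi_apply _) ht, rfl⟩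

private lemma measurableSet_coordEq [MeasurableSingletonClass E] {Υ : Set S} {i : S}
    (hi : i ∈ Υ) (a : E) : MeasurableSet[F E Υ] {ω : S → E | ω i = a} :=
  ⟨(fun f : Υ → E => f ⟨i, hi⟩) ⁻¹' {a},
    (measurable_pi_apply _) (measurableSet_singleton a), rfl⟩

/-- Finite "configuration cylinders". -/
private def cyl (t : Finset S) (a : S → E) : Set (S → E) := {ω | ∀ i ∈ t, ω i = a i}

private lemma cyl_measurable [MeasurableSingletonClass E] {Υ : Set S} {t : Finset S}
    (ht : (t : Set S) ⊆ Υ) (a : S → E) : MeasurableSet[F E Υ] (cyl t a) := by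
  have : cyl (E := E) t a = ⋂ i ∈ t, {ω : S → E | ω i = a i} := by
    ext ω; simp [cyl]
  rw [this]
  exact MeasurableSet.biInter t.countable_toSet fun i hi =>
    measurableSet_coordEq (ht hi) (a i)

/-- The π-system of configuration cylinders inside `Υ`, together with `∅`. -/
private def cylSys (E : Type*) (Υ : Set S) : Set (Set (S → E)) :=
  {A | A = ∅ ∨ ∃ t : Finset S, (t : Set S) ⊆ Υ ∧ ∃ a : S → E, A = cyl t a}

private lemma isPiSystem_cylSys [DecidableEq S] (Υ : Set S) :
    IsPiSystem (cylSys E Υ) := by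
  rintro A (rfl | ⟨t, ht, a, rfl⟩) B hB hne
  · simp at hne
  rcases hB with rfl | ⟨u, hu, b, rfl⟩
  · simp at hne
  obtain ⟨ω₀, hω₀⟩ := hne
  obtain ⟨hω₀a, hω₀b⟩ := hω₀
  refine Or.inr ⟨t ∪ u, ?_, fun i => if i ∈ t then a i else b i, ?_⟩
  · rw [Finset.coe_union]; exact Set.union_subset ht hu
  · ext ω
    constructor
    · rintro ⟨h1, h2⟩ i hi
      show ω i = if i ∈ t then a i else b i
      rcases Finset.mem_union.mp hi with h | h
      · rw [if_pos h]; exact h1 i h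
      · by_cases h' : i ∈ t
        · rw [if_pos h']; exact h1 i h'
        · rw [if_neg h']; exact h2 i h
    · intro hω
      constructor
      · intro i hi
        have h2 : ω i = if i ∈ t then a i else b i := hω i (Finset.mem_union_left u hi)
        rwa [if_pos hi] at h2
      · intro i hi
        have h2 : ω i = if i ∈ t then a i else b i := hω i (Finset.mem_union_right t hi)
        by_cases h' : i ∈ t
        · rw [if_pos h'] at h2
          rw [h2, ← hω₀a i h', hω₀b i hi]
        · rwa [if_neg h'] at h2

private lemma generateFrom_cylSys [Countable E] [MeasurableSingletonClass E] (Υ : Set S) :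
    MeasurableSpace.generateFrom (cylSys E Υ) = F E Υ := by
  refine le_antisymm (MeasurableSpace.generateFrom_le ?_) ?_
  · rintro A (rfl | ⟨t, ht, a, rfl⟩)
    · exact @MeasurableSet.empty _ (F E Υ)
    · exact cyl_measurable ht a
  · have hr : @Measurable (S → E) (Υ → E) (MeasurableSpace.generateFrom (cylSys E Υ))
        MeasurableSpace.pi (fun ω (y : Υ) => ω y) := by
      refine @measurable_pi_lambda _ _ _ (MeasurableSpace.generateFrom (cylSys E Υ)) _ _
        fun y => ?_
      intro s hs
      have hset : (fun ω : S → E => ω y.1) ⁻¹' s = ⋃ a ∈ s, {ω : S → E | ω y.1 = a} := by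
        ext ω; simp
      rw [hset]
      refine MeasurableSet.biUnion s.to_countable fun a _ => ?_
      refine MeasurableSpace.measurableSet_generateFrom (Or.inr ⟨{y.1}, ?_, fun _ => a, ?_⟩)
      · rw [Finset.coe_singleton, Set.singleton_subset_iff]; exact y.2
      · ext ω; simp [cyl]
    rw [F]
    exact hr.comap_le

/- ### Kernel lemmas -/

variable {Λ : Finset S} {κ : (S → E) → BoxMeasure E Λ}

/-- Multiplicativity of a proper kernel over sets measurable in the ring σ-algebra. -/
private lemma prop_mul (hκ : IsProperKernel E Λ κ) {A B : Set (S → E)}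
    (hAfl : MeasurableSet[F E (floorB Λ)] A) (hBfl : MeasurableSet[F E (floorB Λ)] B)
    (hBr : MeasurableSet[F E (ringB Λ)] B) (ω : S → E) :
    κ ω (A ∩ B) = B.indicator (fun _ => (1 : ℝ≥0∞)) ω * κ ω A := by
  haveI := hκ.prob ω
  have hproper := hκ.proper B hBr ω
  by_cases hω : ω ∈ B
  · have hB1 : κ ω B = 1 := by rw [hproper, Set.indicator_of_mem hω]
    have hcompl : κ ω Bᶜ = 0 := by
      rw [measure_compl hBfl (measure_ne_top _ _), hB1, measure_univ, tsub_self]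
    have hdiff : κ ω (A \ B) = 0 :=
      measure_mono_null (Set.diff_subset_compl A B) hcompl
    have hsplit := measure_inter_add_diff (μ := κ ω) A hBfl
    rw [hdiff, add_zero] at hsplit
    rw [Set.indicator_of_mem hω, one_mul, hsplit]
  · have hB0 : κ ω B = 0 := by rw [hproper, Set.indicator_of_notMem hω]
    rw [Set.indicator_of_notMem hω, zero_mul]
    exact measure_mono_null Set.inter_subset_right hB0

/-- Key measurability lemma: for `A` measurable in coordinates `Υ ⊆ ⌊Λ⌋`, the map
`ω ↦ κ(A, ω)` is measurable w.r.t. the coordinates in `(Υ \ Λ) ∪ Λ₋`. -/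
private lemma kernel_apply_measurable [Countable E] [MeasurableSingletonClass E] [DecidableEq S]
    (hκ : IsProperKernel E Λ κ) {Υ : Set S} (hΥ : Υ ⊆ floorB Λ)
    {A : Set (S → E)} (hA : MeasurableSet[F E Υ] A) :
    Measurable[F E ((Υ \ (Λ : Set S)) ∪ past (Λ : Set S))] fun ω => κ ω A := by
  have hle : F E Υ ≤ F E (floorB Λ) := F_mono hΥ
  refine MeasurableSpace.induction_on_inter (m := F E Υ)
    (C := fun A _ => Measurable[F E ((Υ \ (Λ : Set S)) ∪ past (Λ : Set S))] fun ω => κ ω A)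
    (generateFrom_cylSys Υ).symm (isPiSystem_cylSys Υ) ?_ ?_ ?_ ?_ _ hA
  · simp only [measure_empty]
    exact measurable_const
  · rintro B (rfl | ⟨t, ht, a, rfl⟩)
    · simp only [measure_empty]; exact measurable_const
    · have hsplit : cyl (E := E) t a = cyl (t ∩ Λ) a ∩ cyl (t \ Λ) a := by
        ext ω
        simp only [cyl, Set.mem_setOf_eq, Set.mem_inter_iff, Finset.mem_inter, Finset.mem_sdiff]
        constructor
        · exact fun h => ⟨fun i hi => h i hi.1, fun i hi => h i hi.1⟩
        · intro h i hi
          by_cases h' : i ∈ Λ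
          · exact h.1 i ⟨hi, h'⟩
          · exact h.2 i ⟨hi, h'⟩
      have htΛ : ((t ∩ Λ : Finset S) : Set S) ⊆ (Λ : Set S) := by
        intro i hi; rw [Finset.mem_coe, Finset.mem_inter] at hi; exact hi.2
      have htd : ((t \ Λ : Finset S) : Set S) ⊆ Υ \ (Λ : Set S) := by
        intro i hi
        rw [Finset.mem_coe, Finset.mem_sdiff] at hi
        exact ⟨ht hi.1, fun h => hi.2 h⟩
      have hA1fl : MeasurableSet[F E (floorB Λ)] (cyl (t ∩ Λ) a) :=
        cyl_measurable (htΛ.trans (subset_floorB Λ)) a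
      have hA1Λ : MeasurableSet[F E ((Λ : Set S))] (cyl (t ∩ Λ) a) :=
        cyl_measurable htΛ a
      have htring : ((t \ Λ : Finset S) : Set S) ⊆ ringB Λ := fun i hi =>
        floor_diff_subset_ring Λ ⟨hΥ (htd hi).1, (htd hi).2⟩
      have hBfl : MeasurableSet[F E (floorB Λ)] (cyl (t \ Λ) a) :=
        cyl_measurable (fun i hi => hΥ (htd hi).1) a
      have hBring : MeasurableSet[F E (ringB Λ)] (cyl (t \ Λ) a) :=
        cyl_measurable htring a
      have hBM : MeasurableSet[F E ((Υ \ (Λ : Set S)) ∪ past (Λ : Set S))] (cyl (t \ Λ) a) :=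
        cyl_measurable (htd.trans Set.subset_union_left) a
      have hval : ∀ ω, κ ω (cyl t a) =
          (cyl (t \ Λ) a).indicator (fun _ => (1 : ℝ≥0∞)) ω * κ ω (cyl (t ∩ Λ) a) := fun ω => by
        rw [hsplit]; exact prop_mul hκ hA1fl hBfl hBring ω
      simp only [hval]
      exact (measurable_const.indicator hBM).mul
        ((hκ.measPast _ hA1Λ).mono (F_mono Set.subset_union_right) le_rfl)
  · intro B hB ih
    have : ∀ ω, κ ω Bᶜ = 1 - κ ω B := by
      intro ω
      haveI := hκ.prob ω
      rw [measure_compl (hle B hB) (measure_ne_top _ _), measure_univ]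
    simp only [this]
    exact Measurable.const_sub ih 1
  · intro f hdisj hmeas ih
    have : ∀ ω, κ ω (⋃ i, f i) = ∑' i, κ ω (f i) := fun ω =>
      measure_iUnion hdisj fun i => hle _ (hmeas i)
    simp only [this]
    exact Measurable.ennreal_tsum ih


/- ### Integral lemmas -/

private lemma proper_integral (hκ : IsProperKernel E Λ κ) (hΛ : IsTimeBox Λ)
    {f : (S → E) → ℝ} (hf : StronglyMeasurable[F E (ringB Λ)] f) (ω : S → E) :
    ∫ ξ, f ξ ∂(κ ω) = f ω := by
  have hm : F E (ringB Λ) ≤ F E (floorB Λ) := F_mono (ring_subset_floor hΛ)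
  have htrim : (κ ω).trim hm = @Measure.dirac _ (F E (ringB Λ)) ω := by
    refine @Measure.ext _ (F E (ringB Λ)) _ _ fun s hs => ?_
    rw [trim_measurableSet_eq hm hs, hκ.proper s hs ω]
    exact (@Measure.dirac_apply' _ (F E (ringB Λ)) s ω hs).symm
  rw [integral_trim hm hf, htrim]
  exact @integral_dirac' _ _ _ _ _ (F E (ringB Λ)) f ω hf

private lemma bounded_integral {β : Type*} {m : MeasurableSpace β} {μ : β → @Measure β m}
    (hprob : ∀ ω, IsProbabilityMeasure (μ ω)) {h : β → ℝ} (hb : Bounded h) :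
    Bounded fun ω => ∫ ξ, h ξ ∂(μ ω) := by
  obtain ⟨C, hC⟩ := hb
  refine ⟨|C|, fun ω => ?_⟩
  haveI := hprob ω
  have h1 : ‖∫ ξ, h ξ ∂(μ ω)‖ ≤ |C| * ((μ ω) Set.univ).toReal :=
    norm_integral_le_of_norm_le_const (Filter.Eventually.of_forall fun ξ => by
      rw [Real.norm_eq_abs]; exact (hC ξ).trans (le_abs_self C))
  rw [Real.norm_eq_abs] at h1
  simpa [measure_univ] using h1

/-- Measurability of `ω ↦ ∫ h dκ(·,ω)` w.r.t. the coordinates in `(Υ \ Λ) ∪ Λ₋`. -/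
private lemma integral_kernel_measurable [Countable E] [MeasurableSingletonClass E] [DecidableEq S]
    (hκ : IsProperKernel E Λ κ) {Υ : Set S} (hΥ : Υ ⊆ floorB Λ)
    {h : (S → E) → ℝ} (hh : Measurable[F E Υ] h) :
    Measurable[F E ((Υ \ (Λ : Set S)) ∪ past (Λ : Set S))] fun ω => ∫ ξ, h ξ ∂(κ ω) := by
  set M := F E ((Υ \ (Λ : Set S)) ∪ past (Λ : Set S)) with hM
  have hle : F E Υ ≤ F E (floorB Λ) := F_mono hΥ
  have Kmeas : @Measurable _ _ M (@Measure.instMeasurableSpace _ (F E Υ))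
      (fun ω => (κ ω).trim hle) := by
    refine @Measure.measurable_of_measurable_coe _ _ (F E Υ) M (fun ω => (κ ω).trim hle)
      fun s hs => ?_
    have : (fun ω => ((κ ω).trim hle) s) = fun ω => κ ω s :=
      funext fun ω => trim_measurableSet_eq hle hs
    rw [this]
    exact kernel_apply_measurable hκ hΥ hs
  let K : @Kernel (S → E) (S → E) M (F E Υ) := @Kernel.mk _ _ M (F E Υ)
    (fun ω => (κ ω).trim hle) Kmeas
  have hKapp : ∀ ω, K ω = (κ ω).trim hle := fun ω => rfl
  haveI : @IsMarkovKernel _ _ M (F E Υ) K := by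
    refine @IsMarkovKernel.mk _ _ M (F E Υ) K fun ω => ?_
    refine @IsProbabilityMeasure.mk _ (F E Υ) (K ω) ?_
    rw [hKapp, trim_measurableSet_eq hle MeasurableSet.univ]
    haveI := hκ.prob ω
    exact measure_univ
  have hsm : StronglyMeasurable[F E Υ] h := hh.stronglyMeasurable
  have huncurry : StronglyMeasurable[@Prod.instMeasurableSpace _ _ M (F E Υ)]
      (fun p : (S → E) × (S → E) => h p.2) :=
    hsm.comp_measurable (@measurable_snd _ _ M (F E Υ))
  have hint : StronglyMeasurable[M] fun ω => ∫ ξ, h ξ ∂(K ω) :=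
    huncurry.integral_kernel_prod_right'
  have heq : (fun ω => ∫ ξ, h ξ ∂(κ ω)) = fun ω => ∫ ξ, h ξ ∂(K ω) := by
    refine funext fun ω => ?_
    rw [hKapp]
    exact integral_trim hle hsm
  rw [heq]
  exact hint.measurable

private lemma recon_empty {κ₀ : (S → E) → BoxMeasure E (∅ : Finset S)}
    (hκ₀ : IsProperKernel E ∅ κ₀) {h : (S → E) → ℝ}
    (hh : Measurable[F E (floorB (∅ : Finset S))] h) (ω : S → E) :
    ∫ ξ, h ξ ∂(κ₀ ω) = h ω := by
  have heq : ringB (∅ : Finset S) = floorB (∅ : Finset S) := by rw [ringB_empty, floorB_empty]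
  have hsm : StronglyMeasurable[F E (ringB (∅ : Finset S))] h := by
    rw [heq]; exact hh.stronglyMeasurable
  exact proper_integral hκ₀ timeBox_empty hsm ω

end Reconstruction

/-- **Reconstruction theorem**: a POS kernel on any time box is the composition of the
single-site kernels, for a suitable enumeration of the points of the box. -/
theorem reconstruction {S : Type*} [PartialOrder S] [Countable S] [DecidableEq S]
    {E : Type*} [MeasurableSpace E] [Countable E] [MeasurableSingletonClass E]
    (hS : Standing S)
    (γ : ∀ Λ : Finset S, (S → E) → BoxMeasure E Λ) (hγ : IsPOS E γ)
    (Δ : Finset S) (hΔ : IsTimeBox Δ) :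
    ∃ L : List S, L.Nodup ∧ L.toFinset = Δ ∧
      ∀ h : (S → E) → ℝ, Measurable[F E (floorB Δ)] h → Bounded h →
        ∀ ω : S → E, ∫ ξ, h ξ ∂(γ Δ ω) = iterInt γ h L ω := by
  classical
  suffices H : ∀ (n : ℕ) (Δ : Finset S), Δ.card ≤ n → IsTimeBox Δ →
      ∃ L : List S, L.Nodup ∧ L.toFinset = Δ ∧
        ∀ h : (S → E) → ℝ, Measurable[F E (floorB Δ)] h → Bounded h →
          ∀ ω : S → E, ∫ ξ, h ξ ∂(γ Δ ω) = iterInt γ h L ω by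
    exact H Δ.card Δ le_rfl hΔ
  intro n
  induction n with
  | zero =>
    intro Δ hcard hTB
    have hΔe : Δ = ∅ := Finset.card_eq_zero.mp (Nat.le_zero.mp hcard)
    subst hΔe
    exact ⟨[], List.nodup_nil, by simp, fun h hh hb ω =>
      recon_empty (hγ.proper ∅ timeBox_empty) hh ω⟩
  | succ n IH =>
    intro Δ hcard hTB
    rcases Finset.eq_empty_or_nonempty Δ with rfl | hne
    · exact ⟨[], List.nodup_nil, by simp, fun h hh hb ω =>
        recon_empty (hγ.proper ∅ timeBox_empty) hh ω⟩
    obtain ⟨x, hxΔ, hxmin⟩ := Δ.exists_minimal hne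
    have hxmin : ∀ y ∈ Δ, ¬ y < x := fun y hy hlt => lt_irrefl _ (hlt.trans_le (hxmin hy hlt.le))
    set Δ' := Δ.erase x with hΔ'def
    have htbΔ' : IsTimeBox Δ' := timeBox_erase hTB hxΔ hxmin
    have hcard' : Δ'.card ≤ n := by
      rw [hΔ'def, Finset.card_erase_of_mem hxΔ]
      omega
    obtain ⟨L', hnd, htf, hL'⟩ := IH Δ' hcard' htbΔ'
    have hxL' : x ∉ L' := by
      intro hx
      have hx' : x ∈ Δ' := htf ▸ List.mem_toFinset.mpr hx
      exact (Finset.mem_erase.mp hx').1 rfl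
    refine ⟨x :: L', List.nodup_cons.mpr ⟨hxL', hnd⟩,
      by rw [List.toFinset_cons, htf]; exact Finset.insert_erase hxΔ, fun h hh hb ω => ?_⟩
    have hκΔ := hγ.proper Δ hTB
    have hκΔ' := hγ.proper Δ' htbΔ'
    have hκx := hγ.proper {x} (timeBox_singleton x)
    have hfloor : floorB Δ ⊆ floorB Δ' := floor_subset_floor_erase hTB hxΔ hxmin
    have hh' : Measurable[F E (floorB Δ')] h := hh.mono (F_mono hfloor) le_rfl
    set G : (S → E) → ℝ := fun σ => ∫ ξ, h ξ ∂(γ Δ' σ) with hGdef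
    have hGmeas : Measurable[F E ((floorB Δ \ (Δ' : Set S)) ∪ past (Δ' : Set S))] G :=
      integral_kernel_measurable hκΔ' hfloor hh
    have hGbd : Bounded G := bounded_integral hκΔ'.prob hb
    have hsub1 := aux_subset_floor_x hTB hxΔ hxmin
    have hGx : Measurable[F E (floorB ({x} : Finset S))] G :=
      hGmeas.mono (F_mono hsub1) le_rfl
    set G2 : (S → E) → ℝ := fun σ => ∫ ξ, G ξ ∂(γ ({x} : Finset S) σ) with hG2def
    have hG2meas := integral_kernel_measurable hκx hsub1 hGmeas
    have hG2ring : Measurable[F E (ringB Δ)] G2 :=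
      hG2meas.mono (F_mono (aux_subset_ring hTB hxΔ hxmin)) le_rfl
    have e1 : ∫ ξ, h ξ ∂(γ Δ ω) = ∫ σ, G σ ∂(γ Δ ω) :=
      (hγ.consist Δ' Δ htbΔ' hTB (Finset.erase_subset x Δ) h hh' hb ω).symm
    have e2 : ∫ σ, G σ ∂(γ Δ ω) = ∫ σ, G2 σ ∂(γ Δ ω) :=
      (hγ.consist {x} Δ (timeBox_singleton x) hTB
        (Finset.singleton_subset_iff.mpr hxΔ) G hGx hGbd ω).symm
    have e3 : ∫ σ, G2 σ ∂(γ Δ ω) = G2 ω := proper_integral hκΔ hTB hG2ring.stronglyMeasurable ω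
    have e4 : G2 ω = iterInt γ h (x :: L') ω := by
      show (∫ ξ, G ξ ∂(γ ({x} : Finset S) ω)) = ∫ ξ, iterInt γ h L' ξ ∂(γ ({x} : Finset S) ω)
      have hGL : G = fun ξ => iterInt γ h L' ξ := funext fun ξ => hL' h hh' hb ξ
      rw [hGL]
    rw [e1, e2, e3, e4]

end POCpaper
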